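/- arXiv:2211.13668 — 5 statements merged into one kernel-verified Lean document; each statement's English description precedes it below -/
import Mathlib

section
/- Let h : ℝ^d → ℝ be differentiable with l-Lipschitz gradient, suppose h attains a finite maximum h* = max_y h(y) with nonempty argmax set Y* = argmax h, and suppose h satisfies the PL condition with constant μ > 0: ‖∇h(y)‖² ≥ 2μ (h* − h(y)) for all y. Then for every y, ‖∇h(y)‖ ≥ μ · dist(y, Y*), where dist(y, Y*) = inf_{y'∈Y*} ‖y − y'‖. -/
open Metric Set

/-!
Put `f = h* - h ≥ 0`. By the PL inequality `g = √f` has slope at least `√(μ / 2)` wherever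
`g > 0`. For `ε < √(μ / 2)`, a minimiser `x` of `g + ε ‖· - y‖` (it exists because sublevel sets
are compact in finite dimension) is an Ekeland point: `g` has slope at most `ε` at `x`, so `g x = 0`
and `ε ‖x - y‖ ≤ g y`. Letting `ε → √(μ / 2)` gives quadratic growth
`μ / 2 · dist(y, Y*)² ≤ h* - h y`, and PL once more turns this into `μ · dist(y, Y*) ≤ ‖∇h y‖`.
-/

theorem Continuous.exists_ekeland_point {X : Type*} [PseudoMetricSpace X] [ProperSpace X]
    {g : X → ℝ} (hg : Continuous g) (hbdd : BddBelow (range g)) {ε : ℝ} (hε : 0 < ε) (y : X) :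
    ∃ x, g x + ε * dist x y ≤ g y ∧ ∀ z, g x ≤ g z + ε * dist z x := by
  obtain ⟨m, hm⟩ := hbdd
  set S := {z | g z + ε * dist z y ≤ g y}
  have hS_ball : S ⊆ closedBall y ((g y - m) / ε) := fun z hz => by
    rw [mem_closedBall, le_div_iff₀ hε]
    have hz : g z + ε * dist z y ≤ g y := hz
    linarith [hm ⟨z, rfl⟩]
  have hS : IsCompact S :=
    (isCompact_closedBall _ _).of_isClosed_subset (isClosed_le (by fun_prop) (by fun_prop)) hS_ball
  obtain ⟨x, hxS, hxmin⟩ := hS.exists_isMinOn ⟨y, by simp [S]⟩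
    (by fun_prop : Continuous fun z => g z + ε * dist z y).continuousOn
  refine ⟨x, hxS, fun z => ?_⟩
  by_contra! hlt
  have hzx : g z + ε * dist z y < g x + ε * dist x y := by
    linarith [mul_le_mul_of_nonneg_left (dist_triangle z x y) hε.le]
  exact (hxmin (show z ∈ S from hzx.le.trans hxS)).not_gt hzx

section NormedSpace

variable {E : Type*} [NormedAddCommGroup E] [NormedSpace ℝ E]

theorem norm_le_of_forall_le_add_mul_norm_sub {g : E → ℝ} {g' : E →L[ℝ] ℝ} {x : E} {ε : ℝ}
    (hε : 0 ≤ ε) (hg : HasFDerivAt g g' x) (hmin : ∀ z, g x ≤ g z + ε * ‖z - x‖) :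
    ‖g'‖ ≤ ε := by
  have hdir : ∀ v, -(ε * ‖v‖) ≤ g' v := fun v => by
    refine ge_of_tendsto (hg.hasLineDerivAt v).tendsto_slope_zero_right ?_
    filter_upwards [self_mem_nhdsWithin] with t (ht : 0 < t)
    have := hmin (x + t • v)
    rw [add_sub_cancel_left, norm_smul, Real.norm_of_nonneg ht.le] at this
    rw [smul_eq_mul, le_inv_mul_iff₀ ht]
    linarith
  refine g'.opNorm_le_bound hε fun v => abs_le.2 ⟨hdir v, ?_⟩
  simpa using hdir (-v)

theorem mul_infDist_zeros_le_of_le_norm_hasFDerivAt [ProperSpace E] {g : E → ℝ}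
    (hg : Continuous g) (hg0 : ∀ x, 0 ≤ g x) {c : ℝ}
    (hslope : ∀ x, 0 < g x → ∃ g' : E →L[ℝ] ℝ, HasFDerivAt g g' x ∧ c ≤ ‖g'‖) (y : E) :
    c * infDist y (g ⁻¹' {0}) ≤ g y := by
  set D := infDist y (g ⁻¹' {0})
  by_contra! hlt
  have hD : 0 < D := infDist_nonneg.lt_of_ne fun hD0 => by
    rw [show D = 0 from hD0.symm, mul_zero] at hlt
    exact (hg0 y).not_gt hlt
  obtain ⟨ε, hyε, hεc⟩ := exists_between ((div_lt_iff₀ hD).2 hlt)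
  have hε : 0 < ε := (div_nonneg (hg0 y) hD.le).trans_lt hyε
  obtain ⟨x, hxy, hxmin⟩ := hg.exists_ekeland_point ⟨0, by rintro _ ⟨z, rfl⟩; exact hg0 z⟩ hε y
  have hx0 : g x = 0 := by
    by_contra hx0
    obtain ⟨g', hg', hcg'⟩ := hslope x ((hg0 x).lt_of_ne' hx0)
    have := norm_le_of_forall_le_add_mul_norm_sub hε.le hg'
      (by simpa only [dist_eq_norm] using hxmin)
    linarith
  have hDx : D ≤ dist x y := dist_comm y x ▸ infDist_le_dist_of_mem hx0
  rw [div_lt_iff₀ hD] at hyε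
  linarith [mul_le_mul_of_nonneg_left hDx hε.le]

theorem half_mul_infDist_zeros_sq_le_of_polyakLojasiewicz [ProperSpace E] {f : E → ℝ} {μ : ℝ}
    (hμ : 0 ≤ μ) (hf : Differentiable ℝ f) (hf0 : ∀ x, 0 ≤ f x)
    (hPL : ∀ x, 2 * μ * f x ≤ ‖fderiv ℝ f x‖ ^ 2) (y : E) :
    μ / 2 * infDist y (f ⁻¹' {0}) ^ 2 ≤ f y := by
  have hzeros : (fun x => √(f x)) ⁻¹' {0} = f ⁻¹' {0} := by
    ext x
    simp [Real.sqrt_eq_zero (hf0 x)]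
  have hslope (x : E) (hx : 0 < √(f x)) :
      ∃ g' : E →L[ℝ] ℝ, HasFDerivAt (fun x => √(f x)) g' x ∧ √(μ / 2) ≤ ‖g'‖ := by
    have hfx : 0 < f x := Real.sqrt_pos.1 hx
    refine ⟨_, (hf x).hasFDerivAt.sqrt hfx.ne', ?_⟩
    rw [norm_smul, Real.norm_of_nonneg (by positivity), one_div, ← div_eq_inv_mul,
      le_div_iff₀ (by positivity)]
    refine le_of_sq_le_sq ?_ (norm_nonneg _)
    calc (√(μ / 2) * (2 * √(f x))) ^ 2 = 2 * μ * f x := by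
          rw [mul_pow, mul_pow, Real.sq_sqrt (by positivity), Real.sq_sqrt hfx.le]
          ring
      _ ≤ ‖fderiv ℝ f x‖ ^ 2 := hPL x
  have hbound := mul_infDist_zeros_le_of_le_norm_hasFDerivAt hf.continuous.sqrt
    (fun x => Real.sqrt_nonneg _) hslope y
  rw [hzeros] at hbound
  calc μ / 2 * infDist y (f ⁻¹' {0}) ^ 2 = (√(μ / 2) * infDist y (f ⁻¹' {0})) ^ 2 := by
        rw [mul_pow, Real.sq_sqrt (by positivity)]
    _ ≤ √(f y) ^ 2 := pow_le_pow_left₀ (mul_nonneg (Real.sqrt_nonneg _) infDist_nonneg) hbound 2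
    _ = f y := Real.sq_sqrt (hf0 y)

theorem mul_infDist_zeros_le_norm_fderiv_of_polyakLojasiewicz [ProperSpace E] {f : E → ℝ}
    {μ : ℝ} (hμ : 0 ≤ μ) (hf : Differentiable ℝ f) (hf0 : ∀ x, 0 ≤ f x)
    (hPL : ∀ x, 2 * μ * f x ≤ ‖fderiv ℝ f x‖ ^ 2) (y : E) :
    μ * infDist y (f ⁻¹' {0}) ≤ ‖fderiv ℝ f y‖ := by
  refine le_of_sq_le_sq ?_ (norm_nonneg _)
  calc (μ * infDist y (f ⁻¹' {0})) ^ 2 = 2 * μ * (μ / 2 * infDist y (f ⁻¹' {0}) ^ 2) := by ring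
    _ ≤ 2 * μ * f y := by
      gcongr
      exact half_mul_infDist_zeros_sq_le_of_polyakLojasiewicz hμ hf hf0 hPL y
    _ ≤ ‖fderiv ℝ f y‖ ^ 2 := hPL y

end NormedSpace

theorem PL_implies_quadratic_growth_of_distance_general {d : ℕ}
    (h : EuclideanSpace ℝ (Fin d) → ℝ) (hstar μ : ℝ) (hμ : 0 < μ)
    (hdiff : Differentiable ℝ h)
    (hmax : IsGreatest (Set.range h) hstar)
    (hPL : ∀ y, ‖gradient h y‖ ^ 2 ≥ 2 * μ * (hstar - h y)) :
    ∀ y, μ * Metric.infDist y {y' | h y' = hstar} ≤ ‖gradient h y‖ := by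
  have hnorm (x : EuclideanSpace ℝ (Fin d)) :
      ‖fderiv ℝ (fun x => hstar - h x) x‖ = ‖gradient h x‖ := by
    simp [fderiv_const_sub, gradient]
  have hzeros : (fun x => hstar - h x) ⁻¹' {0} = {y' | h y' = hstar} := by
    ext
    simp [sub_eq_zero, eq_comm]
  intro y
  simpa only [hzeros, hnorm] using
    mul_infDist_zeros_le_norm_fderiv_of_polyakLojasiewicz hμ.le (hdiff.const_sub hstar)
      (fun x => sub_nonneg.2 (hmax.2 ⟨x, rfl⟩)) (fun x => hnorm x ▸ hPL x) y

/-- If `h` is differentiable with `l`-Lipschitz gradient, attains a finite maximum `hstar` with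
(nonempty) maximizer set `Y* = {y | h y = hstar}`, and satisfies the PL condition with constant
`μ > 0`, then `‖∇h(y)‖ ≥ μ · dist(y, Y*)` for every `y`. -/
theorem PL_implies_quadratic_growth_of_distance {d : ℕ}
    (h : EuclideanSpace ℝ (Fin d) → ℝ) (hstar l μ : ℝ) (hμ : 0 < μ)
    (hdiff : Differentiable ℝ h)
    (hlip : ∀ y1 y2, ‖gradient h y1 - gradient h y2‖ ≤ l * ‖y1 - y2‖)
    (hmax : IsGreatest (Set.range h) hstar)
    (hPL : ∀ y, ‖gradient h y‖ ^ 2 ≥ 2 * μ * (hstar - h y)) :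
    ∀ y, μ * Metric.infDist y {y' | h y' = hstar} ≤ ‖gradient h y‖ :=
  PL_implies_quadratic_growth_of_distance_general h hstar μ hμ hdiff hmax hPL
end

section
/- Let f : ℝ^{d1} × ℝ^{d2} → ℝ be differentiable with l-Lipschitz gradients, suppose that for every x the maximum Φ(x) = max_y f(x,y) is attained and finite, and that f satisfies the PL condition in y with constant μ > 0: ‖∇_y f(x,y)‖² ≥ 2μ (max_{y'} f(x,y') − f(x,y)) for all x,y. Assume moreover that Φ is differentiable with ∇Φ(x) = ∇_x f(x, y') for every maximizer y' ∈ argmax_y f(x,y). Then for all x and y, ‖∇_x f(x,y) − ∇Φ(x)‖² ≤ κ² ‖∇_y f(x,y)‖², where κ = l/μ. -/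
open MeasureTheory Metric

/-- Gradient of `f` with respect to the first block of variables. -/
noncomputable def gradx {d1 d2 : ℕ}
    (f : EuclideanSpace ℝ (Fin d1) → EuclideanSpace ℝ (Fin d2) → ℝ)
    (x : EuclideanSpace ℝ (Fin d1)) (y : EuclideanSpace ℝ (Fin d2)) :
    EuclideanSpace ℝ (Fin d1) :=
  gradient (fun x' => f x' y) x

/-- Gradient of `f` with respect to the second block of variables. -/
noncomputable def grady {d1 d2 : ℕ}
    (f : EuclideanSpace ℝ (Fin d1) → EuclideanSpace ℝ (Fin d2) → ℝ)
    (x : EuclideanSpace ℝ (Fin d1)) (y : EuclideanSpace ℝ (Fin d2)) :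
    EuclideanSpace ℝ (Fin d2) :=
  gradient (fun y' => f x y') y

/-! Fix `x` and put `h = f x`. A gradient ascent step `y ↦ y + η ∇h(y)` with `lη < 1` raises `h`
by at least `η(1 - lη)‖∇h‖²`; combined with the PL inequality this makes the potential
`√(2(Φ x - h)/μ)` drop by at least `(1 - lη)` times the step length. Hence the iterates from `y`
converge, within distance `√(2(Φ x - h y)/μ)/(1 - lη)` of `y`, to a fixed point, i.e. a critical
point, which PL forces to be a maximizer. Letting `η → 0` and applying PL at `y` bounds the distance
from `y` to the maximizers by `‖∇h y‖/μ`, and the `l`-Lipschitz continuity of `∇ₓ f` together with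
`∇Φ(x) = ∇ₓ f(x, z)` at a nearest maximizer `z` gives the claim. -/

open InnerProductSpace Filter Topology NNReal

theorem mul_le_sub_of_mul_sq_le_mul_sq_sub {u v a b G : ℝ} (hu : 0 ≤ u) (hv : 0 ≤ v)
    (ha : 0 ≤ a) (hb : 0 < b) (hdecr : b * v ^ 2 ≤ b * u ^ 2 - 2 * a * G ^ 2)
    (hG : b * u ≤ G) : a * G ≤ u - v := by
  have hG0 : 0 ≤ G := (mul_nonneg hb.le hu).trans hG
  have hsq : v ^ 2 ≤ u ^ 2 :=
    le_of_mul_le_mul_left (by nlinarith [mul_nonneg ha (sq_nonneg G)]) hb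
  have hvu : v ≤ u := (pow_le_pow_iff_left₀ hv hu two_ne_zero).1 hsq
  rcases hu.eq_or_lt with rfl | hu
  · have hv0 : v = 0 := le_antisymm hvu hv
    have : a * G * G = 0 := by nlinarith [mul_nonneg ha (sq_nonneg G)]
    rcases mul_eq_zero.1 this with hz | hz <;> simp [hz, hv0]
  · have h1 : a * G * (b * u) ≤ a * G * G := mul_le_mul_of_nonneg_left hG (mul_nonneg ha hG0)
    have h2 : (u - v) * (u + v) ≤ (u - v) * (2 * u) :=
      mul_le_mul_of_nonneg_left (by linarith) (by linarith)
    have : b * u * (a * G) ≤ b * u * (u - v) := by nlinarith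
    exact le_of_mul_le_mul_left this (by positivity)

theorem exists_tendsto_dist_le_of_dist_le_sub {X : Type*} [PseudoMetricSpace X]
    [CompleteSpace X] {u : ℕ → X} {t : ℕ → ℝ} (ht : ∀ n, 0 ≤ t n)
    (hu : ∀ n, dist (u n) (u (n + 1)) ≤ t n - t (n + 1)) :
    ∃ z, Tendsto u atTop (𝓝 z) ∧ dist (u 0) z ≤ t 0 := by
  have hd : ∀ n, 0 ≤ t n - t (n + 1) := fun n => dist_nonneg.trans (hu n)
  have hpartial : ∀ n, ∑ i ∈ Finset.range n, (t i - t (i + 1)) ≤ t 0 := fun n => by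
    rw [Finset.sum_range_sub']; linarith [ht n]
  have hsum := summable_of_sum_range_le hd hpartial
  obtain ⟨z, hz⟩ := cauchySeq_tendsto_of_complete (cauchySeq_of_dist_le_of_summable _ hu hsum)
  exact ⟨z, hz, (dist_le_tsum_of_dist_le_of_tendsto₀ _ hu hsum hz).trans
    (Real.tsum_le_of_sum_range_le hd hpartial)⟩

section

variable {E : Type*} [NormedAddCommGroup E] [InnerProductSpace ℝ E] [CompleteSpace E]
  {h : E → ℝ} {K : ℝ≥0} {μ M : ℝ}

theorem abs_sub_sub_inner_gradient_le (hd : Differentiable ℝ h)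
    (hlip : LipschitzWith K (gradient h)) (a b : E) :
    |h b - h a - ⟪gradient h a, b - a⟫_ℝ| ≤ K * ‖b - a‖ ^ 2 := by
  have hbound : ∀ z ∈ segment ℝ a b, ‖fderiv ℝ h z - toDual ℝ E (gradient h a)‖ ≤ K * ‖b - a‖ :=
    fun z hz => calc
      ‖fderiv ℝ h z - toDual ℝ E (gradient h a)‖ = ‖gradient h z - gradient h a‖ := by
        rw [← toDual_gradient, ← map_sub, LinearIsometryEquiv.norm_map]
      _ ≤ K * ‖z - a‖ := hlip.norm_sub_le z a
      _ ≤ K * ‖b - a‖ := by gcongr; exact norm_sub_le_of_mem_segment hz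
  have := (convex_segment a b).norm_image_sub_le_of_norm_fderiv_le' (fun z _ => hd z) hbound
    (left_mem_segment ℝ a b) (right_mem_segment ℝ a b)
  rw [toDual_apply_apply, Real.norm_eq_abs] at this
  linarith

theorem add_mul_norm_gradient_sq_le (hd : Differentiable ℝ h)
    (hlip : LipschitzWith K (gradient h)) {η : ℝ} (z : E) :
    h z + η * (1 - K * η) * ‖gradient h z‖ ^ 2 ≤ h (z + η • gradient h z) := by
  have := (abs_le.1 (abs_sub_sub_inner_gradient_le hd hlip z (z + η • gradient h z))).1
  rw [add_sub_cancel_left, real_inner_smul_right, real_inner_self_eq_norm_sq, norm_smul,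
    Real.norm_eq_abs, mul_pow, sq_abs] at this
  linarith

theorem sqrt_two_mul_sub_div_le_norm_gradient_div
    (hPL : ∀ z, 2 * μ * (M - h z) ≤ ‖gradient h z‖ ^ 2) (hμ : 0 < μ) (z : E) :
    √(2 * (M - h z) / μ) ≤ ‖gradient h z‖ / μ := by
  rw [Real.sqrt_le_left (by positivity), div_pow, div_le_div_iff₀ hμ (by positivity)]
  nlinarith [hPL z]

theorem mul_norm_smul_gradient_le_sqrt_sub_sqrt (hd : Differentiable ℝ h)
    (hlip : LipschitzWith K (gradient h)) (hub : ∀ z, h z ≤ M)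
    (hPL : ∀ z, 2 * μ * (M - h z) ≤ ‖gradient h z‖ ^ 2) (hμ : 0 < μ) {η : ℝ} (hη : 0 ≤ η)
    (hηK : K * η ≤ 1) (z : E) :
    (1 - K * η) * ‖η • gradient h z‖ ≤
      √(2 * (M - h z) / μ) - √(2 * (M - h (z + η • gradient h z)) / μ) := by
  have hascent := add_mul_norm_gradient_sq_le hd hlip (η := η) z
  have hsq : ∀ w, μ * √(2 * (M - h w) / μ) ^ 2 = 2 * (M - h w) := fun w => by
    rw [Real.sq_sqrt (div_nonneg (by linarith [hub w]) hμ.le)]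
    field_simp
  have := mul_le_sub_of_mul_sq_le_mul_sq_sub (u := √(2 * (M - h z) / μ))
    (v := √(2 * (M - h (z + η • gradient h z)) / μ)) (Real.sqrt_nonneg _) (Real.sqrt_nonneg _)
    (mul_nonneg hη (sub_nonneg.2 hηK)) hμ (by rw [hsq, hsq]; linarith)
    ((le_div_iff₀' hμ).1 (sqrt_two_mul_sub_div_le_norm_gradient_div hPL hμ z))
  rw [norm_smul, Real.norm_of_nonneg hη]
  linarith

theorem exists_eq_and_mul_norm_sub_le_sqrt (hd : Differentiable ℝ h)
    (hlip : LipschitzWith K (gradient h)) (hub : ∀ z, h z ≤ M)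
    (hPL : ∀ z, 2 * μ * (M - h z) ≤ ‖gradient h z‖ ^ 2) (hμ : 0 < μ) {η : ℝ} (hη : 0 < η)
    (hηK : K * η < 1) (y : E) :
    ∃ z, h z = M ∧ (1 - K * η) * ‖y - z‖ ≤ √(2 * (M - h y) / μ) := by
  have hc : 0 < 1 - K * η := sub_pos.2 hηK
  set T : E → E := fun z => z + η • gradient h z with hT
  set t : ℕ → ℝ := fun n => √(2 * (M - h (T^[n] y)) / μ) / (1 - K * η) with ht
  have hstep : ∀ n, dist (T^[n] y) (T^[n + 1] y) ≤ t n - t (n + 1) := fun n => by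
    simp only [Function.iterate_succ_apply', dist_eq_norm', ht, hT, add_sub_cancel_left]
    rw [div_sub_div_same, le_div_iff₀' hc]
    exact mul_norm_smul_gradient_le_sqrt_sub_sqrt hd hlip hub hPL hμ hη.le hηK.le _
  obtain ⟨z, hlim, hdist⟩ := exists_tendsto_dist_le_of_dist_le_sub (fun n => by positivity) hstep
  have hfix : T z = z := isFixedPt_of_tendsto_iterate hlim
    (continuous_id.add (continuous_const.smul hlip.continuous)).continuousAt
  have hcrit : gradient h z = 0 := by
    simpa [hT, hη.ne'] using hfix
  have hzM : h z = M := by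
    have := hPL z
    rw [hcrit, norm_zero] at this
    nlinarith [hub z]
  refine ⟨z, hzM, ?_⟩
  rwa [Function.iterate_zero_apply, dist_eq_norm, le_div_iff₀' hc] at hdist

theorem infDist_preimage_singleton_le_sqrt (hd : Differentiable ℝ h)
    (hlip : LipschitzWith K (gradient h)) (hub : ∀ z, h z ≤ M)
    (hPL : ∀ z, 2 * μ * (M - h z) ≤ ‖gradient h z‖ ^ 2) (hμ : 0 < μ) (y : E) :
    infDist y (h ⁻¹' {M}) ≤ √(2 * (M - h y) / μ) := by
  have hlim : Tendsto (fun η : ℝ => (1 - K * η) * infDist y (h ⁻¹' {M})) (𝓝[>] 0)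
      (𝓝 (infDist y (h ⁻¹' {M}))) := by
    have : Continuous fun η : ℝ => (1 - K * η) * infDist y (h ⁻¹' {M}) := by fun_prop
    simpa using (this.tendsto 0).mono_left nhdsWithin_le_nhds
  refine le_of_tendsto hlim ?_
  filter_upwards [Ioo_mem_nhdsGT (show (0 : ℝ) < 1 / (K + 1) by positivity)] with η ⟨hη, hηlt⟩
  have hηK : K * η < 1 := by
    rw [lt_div_iff₀ (by positivity)] at hηlt
    nlinarith
  obtain ⟨z, hzM, hz⟩ := exists_eq_and_mul_norm_sub_le_sqrt hd hlip hub hPL hμ hη hηK y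
  calc (1 - K * η) * infDist y (h ⁻¹' {M}) ≤ (1 - K * η) * ‖y - z‖ := by
        rw [← dist_eq_norm]
        exact mul_le_mul_of_nonneg_left (infDist_le_dist_of_mem hzM) (by linarith)
    _ ≤ _ := hz

theorem exists_eq_and_norm_sub_le_norm_gradient_div [ProperSpace E] (hd : Differentiable ℝ h)
    (hlip : LipschitzWith K (gradient h)) (hmax : IsGreatest (Set.range h) M)
    (hPL : ∀ z, 2 * μ * (M - h z) ≤ ‖gradient h z‖ ^ 2) (hμ : 0 < μ) (y : E) :
    ∃ z, h z = M ∧ ‖y - z‖ ≤ ‖gradient h y‖ / μ := by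
  have hub : ∀ z, h z ≤ M := fun z => hmax.2 ⟨z, rfl⟩
  obtain ⟨z, hzM, hz⟩ := (isClosed_singleton.preimage hd.continuous).exists_infDist_eq_dist
    hmax.1 y
  refine ⟨z, hzM, ?_⟩
  rw [← dist_eq_norm, ← hz]
  exact (infDist_preimage_singleton_le_sqrt hd hlip hub hPL hμ y).trans
    (sqrt_two_mul_sub_div_le_norm_gradient_div hPL hμ y)

end

theorem gradient_gap_bound_general {d1 d2 : ℕ}
    (f : EuclideanSpace ℝ (Fin d1) → EuclideanSpace ℝ (Fin d2) → ℝ)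
    (Φ : EuclideanSpace ℝ (Fin d1) → ℝ) (l μ : ℝ) (hμ : 0 < μ)
    (hdiff : Differentiable ℝ (fun p : EuclideanSpace ℝ (Fin d1) × EuclideanSpace ℝ (Fin d2) =>
      f p.1 p.2))
    (hlipx : ∀ x1 y1 x2 y2, ‖gradx f x1 y1 - gradx f x2 y2‖ ≤ l * (‖x1 - x2‖ + ‖y1 - y2‖))
    (hlipy : ∀ x1 y1 x2 y2, ‖grady f x1 y1 - grady f x2 y2‖ ≤ l * (‖x1 - x2‖ + ‖y1 - y2‖))
    (hmax : ∀ x, IsGreatest (Set.range (f x)) (Φ x))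
    (hPL : ∀ x y, ‖grady f x y‖ ^ 2 ≥ 2 * μ * (Φ x - f x y))
    (hΦgrad : ∀ x ystar, f x ystar = Φ x → gradient Φ x = gradx f x ystar) :
    ∀ x y, ‖gradx f x y - gradient Φ x‖ ^ 2 ≤ (l / μ) ^ 2 * ‖grady f x y‖ ^ 2 := by
  intro x y
  have hd : Differentiable ℝ (f x) :=
    hdiff.comp ((differentiable_const x).prodMk differentiable_id)
  have hlip : LipschitzWith l.toNNReal (gradient (f x)) := .of_dist_le_mul fun y1 y2 => by
    have := hlipy x y1 x y2
    rw [sub_self, norm_zero, zero_add] at this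
    rw [dist_eq_norm, dist_eq_norm]
    exact this.trans (by gcongr; exact Real.le_coe_toNNReal l)
  obtain ⟨z, hzM, hyz⟩ :=
    exists_eq_and_norm_sub_le_norm_gradient_div hd hlip (hmax x) (hPL x) hμ y
  have hgap : ‖gradx f x y - gradient Φ x‖ ≤ l * ‖y - z‖ := by
    simpa [hΦgrad x z hzM] using hlipx x y x z
  calc ‖gradx f x y - gradient Φ x‖ ^ 2 ≤ l ^ 2 * ‖y - z‖ ^ 2 := by
        rw [← mul_pow]; exact pow_le_pow_left₀ (norm_nonneg _) hgap 2
    _ ≤ l ^ 2 * (‖grady f x y‖ / μ) ^ 2 := by gcongr; exact hyz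
    _ = (l / μ) ^ 2 * ‖grady f x y‖ ^ 2 := by ring

/-- Under the PL condition in `y` with constant `μ > 0`, for `f` with `l`-Lipschitz gradients,
`‖∇ₓ f(x,y) − ∇Φ(x)‖² ≤ κ² ‖∇_y f(x,y)‖²` with `κ = l/μ`. -/
theorem gradient_gap_bound {d1 d2 : ℕ}
    (f : EuclideanSpace ℝ (Fin d1) → EuclideanSpace ℝ (Fin d2) → ℝ)
    (Φ : EuclideanSpace ℝ (Fin d1) → ℝ) (l μ : ℝ) (hμ : 0 < μ)
    (hdiff : Differentiable ℝ (fun p : EuclideanSpace ℝ (Fin d1) × EuclideanSpace ℝ (Fin d2) =>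
      f p.1 p.2))
    (hlipx : ∀ x1 y1 x2 y2, ‖gradx f x1 y1 - gradx f x2 y2‖ ≤ l * (‖x1 - x2‖ + ‖y1 - y2‖))
    (hlipy : ∀ x1 y1 x2 y2, ‖grady f x1 y1 - grady f x2 y2‖ ≤ l * (‖x1 - x2‖ + ‖y1 - y2‖))
    (hmax : ∀ x, IsGreatest (Set.range (f x)) (Φ x))
    (hPL : ∀ x y, ‖grady f x y‖ ^ 2 ≥ 2 * μ * (Φ x - f x y))
    (hΦdiff : Differentiable ℝ Φ)
    (hΦgrad : ∀ x ystar, f x ystar = Φ x → gradient Φ x = gradx f x ystar) :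
    ∀ x y, ‖gradx f x y - gradient Φ x‖ ^ 2 ≤ (l / μ) ^ 2 * ‖grady f x y‖ ^ 2 :=
  gradient_gap_bound_general f Φ l μ hμ hdiff hlipx hlipy hmax hPL hΦgrad
end

section
/- Let f : ℝ^{d1} × ℝ^{d2} → ℝ be differentiable with l-Lipschitz gradients, and for μ1 > 0 define the smoothed function f_{μ1}(x,y) = E_{u ~ U(B_{d1})}[ f(x + μ1 u, y) ], where U(B_{d1}) is the uniform distribution over the unit Euclidean ball of ℝ^{d1}. Then for all x, y: ‖∇_x f_{μ1}(x,y) − ∇_x f(x,y)‖² ≤ μ1² d1² l² / 4. -/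
open MeasureTheory Metric

/-- The uniform probability distribution on the closed unit ball of `ℝ^d`. -/
noncomputable def uniformBall (d : ℕ) : Measure (EuclideanSpace ℝ (Fin d)) :=
  (volume (Metric.closedBall (0 : EuclideanSpace ℝ (Fin d)) 1))⁻¹ •
    volume.restrict (Metric.closedBall (0 : EuclideanSpace ℝ (Fin d)) 1)

/-!
Differentiating under the integral sign gives `∇ₓ f_{μ₁}(x, y) = E[∇ₓ f(x + μ₁ u, y)]`, so by the
Lipschitz bound the gap is at most `l |μ₁| E‖u‖`. In polar coordinates the mean norm of a uniform
point of the unit ball of `ℝ^d` is `d / (d + 1)`, which is at most `d / 2`.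
-/

open Set Filter InnerProductSpace

theorem integrable_of_continuous_of_ae_norm_le {E F : Type*} [NormedAddCommGroup E]
    [MeasurableSpace E] [OpensMeasurableSpace E] [ProperSpace E] [NormedAddCommGroup F]
    {ν : Measure E} [IsFiniteMeasure ν] {R : ℝ} {φ : E → F} (hφ : Continuous φ) (hν : ∀ᵐ v ∂ν, ‖v‖ ≤ R) :
    Integrable φ ν := by
  rw [← Measure.restrict_eq_self_of_ae_mem (μ := ν) (s := closedBall 0 R)
    (by filter_upwards [hν] with v hv using mem_closedBall_zero_iff.mpr hv)]
  exact hφ.continuousOn.integrableOn_compact (isCompact_closedBall 0 R)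

theorem norm_integral_comp_add_smul_sub_le {E F : Type*} [NormedAddCommGroup E] [NormedSpace ℝ E]
    [MeasurableSpace E] [NormedAddCommGroup F] [NormedSpace ℝ F] [CompleteSpace F] {ν : Measure E}
    [IsProbabilityMeasure ν] {G : E → F} {K : ℝ} (hG : ∀ a b, ‖G a - G b‖ ≤ K * ‖a - b‖)
    (x : E) (c : ℝ) (hint : Integrable (fun v => G (x + c • v)) ν)
    (hnorm : Integrable (‖·‖) ν) :
    ‖∫ v, G (x + c • v) ∂ν - G x‖ ≤ K * |c| * ∫ v, ‖v‖ ∂ν := by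
  calc ‖∫ v, G (x + c • v) ∂ν - G x‖ = ‖∫ v, (G (x + c • v) - G x) ∂ν‖ := by
        rw [integral_sub hint (integrable_const _), integral_const, probReal_univ, one_smul]
    _ ≤ ∫ v, K * |c| * ‖v‖ ∂ν := by
        refine norm_integral_le_of_norm_le (hnorm.const_mul _) (ae_of_all _ fun v => ?_)
        calc ‖G (x + c • v) - G x‖ ≤ K * ‖x + c • v - x‖ := hG _ _
          _ = K * |c| * ‖v‖ := by
            rw [add_sub_cancel_left, norm_smul, Real.norm_eq_abs, mul_assoc]
    _ = K * |c| * ∫ v, ‖v‖ ∂ν := integral_const_mul _ _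

section
variable {E : Type*} [NormedAddCommGroup E] [InnerProductSpace ℝ E] [FiniteDimensional ℝ E]
  [MeasurableSpace E] [BorelSpace E] {ν : Measure E} [IsFiniteMeasure ν] {R : ℝ}

theorem hasGradientAt_integral_comp_add_smul {g : E → ℝ} (hg : Differentiable ℝ g)
    (hg' : Continuous (gradient g)) (hν : ∀ᵐ v ∂ν, ‖v‖ ≤ R) (c : ℝ) (x : E) :
    HasGradientAt (fun x => ∫ v, g (x + c • v) ∂ν) (∫ v, gradient g (x + c • v) ∂ν) x := by
  have hshift : ∀ x' : E, Continuous fun v : E => x' + c • v := by fun_prop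
  have hint : Integrable (fun v => gradient g (x + c • v)) ν :=
    integrable_of_continuous_of_ae_norm_le (hg'.comp (hshift x)) hν
  obtain ⟨M, hM⟩ : ∃ M, ∀ p ∈ closedBall x (1 + |c| * R), ‖gradient g p‖ ≤ M :=
    (isCompact_closedBall x _).exists_bound_of_continuousOn hg'.continuousOn
  have hderiv : ∀ x' v, HasFDerivAt (fun z => g (z + c • v))
      (toDual ℝ E (gradient g (x' + c • v))) x' := fun x' v =>
    (hasFDerivAt_comp_add_right (c • v)).mpr (hg _).hasGradientAt.hasFDerivAt
  have hdual : ∫ v, toDual ℝ E (gradient g (x + c • v)) ∂ν =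
      toDual ℝ E (∫ v, gradient g (x + c • v) ∂ν) :=
    ContinuousLinearMap.integral_comp_commSL (by simp)
      (toDual ℝ E).toContinuousLinearEquiv.toContinuousLinearMap hint
  rw [hasGradientAt_iff_hasFDerivAt, ← hdual]
  refine hasFDerivAt_integral_of_dominated_of_fderiv_le (ball_mem_nhds x one_pos)
    (Eventually.of_forall fun x' => (hg.continuous.comp (hshift x')).aestronglyMeasurable)
    (integrable_of_continuous_of_ae_norm_le (hg.continuous.comp (hshift x)) hν)
    ((toDual ℝ E).continuous.comp (hg'.comp (hshift x))).aestronglyMeasurable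
    ?_ (integrable_const M) (ae_of_all _ fun v x' _ => hderiv x' v)
  filter_upwards [hν] with v hv x' hx'
  rw [LinearIsometryEquiv.norm_map]
  refine hM _ ?_
  rw [mem_closedBall, dist_eq_norm, add_sub_right_comm]
  calc ‖x' - x + c • v‖ ≤ ‖x' - x‖ + ‖c • v‖ := norm_add_le _ _
    _ ≤ 1 + |c| * R := by
      rw [norm_smul, Real.norm_eq_abs]
      gcongr
      exact (mem_ball_iff_norm.mp hx').le
end

theorem setIntegral_norm_closedBall_one {E : Type*} [NormedAddCommGroup E] [NormedSpace ℝ E]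
    [Nontrivial E] [MeasurableSpace E] [BorelSpace E] [FiniteDimensional ℝ E]
    (μ : Measure E) [μ.IsAddHaarMeasure] :
    ∫ x in closedBall (0 : E) 1, ‖x‖ ∂μ =
      Module.finrank ℝ E / (Module.finrank ℝ E + 1) * μ.real (ball 0 1) := by
  set d := Module.finrank ℝ E
  have hpow : ∀ y : ℝ, y ^ (d - 1) * y = y ^ d := fun y => by
    rw [← pow_succ, Nat.sub_add_cancel Module.finrank_pos]
  calc ∫ x in closedBall (0 : E) 1, ‖x‖ ∂μ
      = ∫ x, (Iic (1 : ℝ)).indicator id ‖x‖ ∂μ := by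
        rw [← integral_indicator measurableSet_closedBall]
        congr 1 with x
        simp [indicator]
    _ = d • μ.real (ball 0 1) • ∫ y in Ioi (0 : ℝ), y ^ (d - 1) • (Iic (1 : ℝ)).indicator id y :=
        integral_fun_norm_addHaar μ _
    _ = d * μ.real (ball 0 1) * ∫ y in (0 : ℝ)..1, y ^ d := by
        rw [intervalIntegral.integral_of_le zero_le_one, ← integral_indicator measurableSet_Ioi,
          ← integral_indicator measurableSet_Ioc, nsmul_eq_mul, smul_eq_mul, ← mul_assoc]
        congr 2 with y
        by_cases h0 : 0 < y <;> by_cases h1 : y ≤ 1 <;>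
          simp [indicator, h0, h1, hpow]
    _ = d / (d + 1) * μ.real (ball 0 1) := by
        rw [integral_pow]
        field_simp
        ring

instance isProbabilityMeasure_uniformBall (d : ℕ) : IsProbabilityMeasure (uniformBall d) := by
  constructor
  rw [uniformBall, Measure.smul_apply, Measure.restrict_apply_univ, smul_eq_mul,
    ENNReal.inv_mul_cancel (measure_closedBall_pos _ _ one_pos).ne' measure_closedBall_lt_top.ne]

theorem ae_norm_le_one_uniformBall (d : ℕ) : ∀ᵐ u ∂uniformBall d, ‖u‖ ≤ 1 := by
  refine Measure.ae_smul_measure ?_ _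
  filter_upwards [ae_restrict_mem measurableSet_closedBall] with u hu
  exact mem_closedBall_zero_iff.mp hu

theorem integral_norm_uniformBall (d : ℕ) : ∫ u, ‖u‖ ∂uniformBall d = d / (d + 1) := by
  rcases Nat.eq_zero_or_pos d with rfl | hd
  · simp [Subsingleton.elim _ (0 : EuclideanSpace ℝ (Fin 0))]
  have : Nonempty (Fin d) := ⟨⟨0, hd⟩⟩
  have hball :=
    (volume : Measure (EuclideanSpace ℝ (Fin d))).addHaar_closedBall_eq_addHaar_ball 0 1
  have hV : (volume (closedBall (0 : EuclideanSpace ℝ (Fin d)) 1)).toReal ≠ 0 :=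
    ENNReal.toReal_ne_zero.mpr
      ⟨(measure_closedBall_pos _ _ one_pos).ne', measure_closedBall_lt_top.ne⟩
  rw [uniformBall, integral_smul_measure, setIntegral_norm_closedBall_one,
    finrank_euclideanSpace_fin, measureReal_def, ← hball, ENNReal.toReal_inv, smul_eq_mul]
  field_simp

theorem smoothed_gradient_gap_general {d1 d2 : ℕ}
    (f : EuclideanSpace ℝ (Fin d1) → EuclideanSpace ℝ (Fin d2) → ℝ)
    (l μ1 : ℝ)
    (hdiff : Differentiable ℝ (fun p : EuclideanSpace ℝ (Fin d1) × EuclideanSpace ℝ (Fin d2) =>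
      f p.1 p.2))
    (hlipx : ∀ x1 y1 x2 y2, ‖gradx f x1 y1 - gradx f x2 y2‖ ≤ l * (‖x1 - x2‖ + ‖y1 - y2‖)) :
    ∀ (x : EuclideanSpace ℝ (Fin d1)) (y : EuclideanSpace ℝ (Fin d2)),
      ‖gradient (fun x' => ∫ u, f (x' + μ1 • u) y ∂(uniformBall d1)) x - gradx f x y‖ ^ 2 ≤
        μ1 ^ 2 * (d1 : ℝ) ^ 2 * l ^ 2 / 4 := by
  intro x y
  have hball := ae_norm_le_one_uniformBall d1
  have hdiffx : Differentiable ℝ (f · y) :=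
    hdiff.comp (differentiable_id.prodMk (differentiable_const y))
  have hlip : ∀ a b, ‖gradient (f · y) a - gradient (f · y) b‖ ≤ l * ‖a - b‖ := fun a b => by
    simpa [gradx] using hlipx a y b y
  have hcont : Continuous (gradient (f · y)) :=
    (LipschitzWith.of_dist_le' (by simpa only [dist_eq_norm] using hlip)).continuous
  have hgap := norm_integral_comp_add_smul_sub_le hlip x μ1
    (integrable_of_continuous_of_ae_norm_le (hcont.comp (by fun_prop)) hball)
    (integrable_of_continuous_of_ae_norm_le continuous_norm hball)
  rw [integral_norm_uniformBall] at hgap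
  have hd : (d1 : ℝ) / (d1 + 1) ≤ d1 / 2 := by
    rw [div_le_div_iff₀ (by positivity) two_pos]
    have : (d1 : ℝ) ≤ d1 * d1 := by exact_mod_cast Nat.le_mul_self d1
    linarith
  rw [(hasGradientAt_integral_comp_add_smul hdiffx hcont hball μ1 x).gradient, gradx]
  calc _ ≤ (l * |μ1| * (d1 / (d1 + 1))) ^ 2 := pow_le_pow_left₀ (norm_nonneg _) hgap 2
    _ ≤ (l * |μ1|) ^ 2 * (d1 / 2) ^ 2 := by rw [mul_pow]; gcongr
    _ = μ1 ^ 2 * (d1 : ℝ) ^ 2 * l ^ 2 / 4 := by rw [mul_pow, sq_abs]; ring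

/-- For `f` differentiable with `l`-Lipschitz gradients and the uniformly smoothed function
`f_{μ1}(x,y) = E_{u ~ U(B_{d1})}[f(x + μ1 u, y)]`, one has
`‖∇ₓ f_{μ1}(x,y) − ∇ₓ f(x,y)‖² ≤ μ1² d1² l² / 4`. -/
theorem smoothed_gradient_gap {d1 d2 : ℕ}
    (f : EuclideanSpace ℝ (Fin d1) → EuclideanSpace ℝ (Fin d2) → ℝ)
    (l μ1 : ℝ) (hμ1 : 0 < μ1)
    (hdiff : Differentiable ℝ (fun p : EuclideanSpace ℝ (Fin d1) × EuclideanSpace ℝ (Fin d2) =>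
      f p.1 p.2))
    (hlipx : ∀ x1 y1 x2 y2, ‖gradx f x1 y1 - gradx f x2 y2‖ ≤ l * (‖x1 - x2‖ + ‖y1 - y2‖))
    (hlipy : ∀ x1 y1 x2 y2,
      ‖gradient (fun y' => f x1 y') y1 - gradient (fun y' => f x2 y') y2‖ ≤
        l * (‖x1 - x2‖ + ‖y1 - y2‖)) :
    ∀ (x : EuclideanSpace ℝ (Fin d1)) (y : EuclideanSpace ℝ (Fin d2)),
      ‖gradient (fun x' => ∫ u, f (x' + μ1 • u) y ∂(uniformBall d1)) x - gradx f x y‖ ^ 2 ≤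
        μ1 ^ 2 * (d1 : ℝ) ^ 2 * l ^ 2 / 4 :=
  smoothed_gradient_gap_general f l μ1 hdiff hlipx
end

section
/- Let f : ℝ^{d1} × ℝ^{d2} → ℝ be differentiable with l-Lipschitz gradients and let μ1 > 0. For u on the unit sphere S^{d1−1} ⊂ ℝ^{d1} define ĝ(x,y;u) = (d1/μ1)(f(x + μ1 u, y) − f(x,y)) u. Then for all (x1,y1), (x2,y2): E_{u ~ U(S^{d1−1})} ‖ ĝ(x1,y1;u) − ĝ(x2,y2;u) ‖² ≤ 3 d1 l² (‖x1 − x2‖² + ‖y1 − y2‖²) + (3/2) l² μ1² d1². -/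
/-!
Let `g = ∇ₓf(x₁, y₁) - ∇ₓf(x₂, y₂)`, `s = l (‖x₁ - x₂‖ + ‖y₁ - y₂‖)` and let `φ(u)` be the
difference of the two difference quotients `(f(xᵢ + μ₁u, yᵢ) - f(xᵢ, yᵢ)) / μ₁`, so that the
integrand is `d₁² φ(u)²` on the sphere. By the mean value theorem `φ` is `s`-Lipschitz, and by the
second-order Taylor bound it is within `l μ₁` of `⟪g, u⟫` on the sphere. Expand
`φ² = 2 ⟪g, u⟫ φ - ⟪g, u⟫² + (φ - ⟪g, u⟫)²`. Rotation invariance gives `E ⟪g, u⟫² = ‖g‖² / d₁`,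
and averaging over `u` and its reflection in `gᗮ` (which negates `⟪g, u⟫` and moves `u` by
`2 |⟪g, u⟫| / ‖g‖`) gives `E ⟪g, u⟫ φ ≤ s ‖g‖ / d₁`. Hence
`d₁ E φ² ≤ 2 s ‖g‖ - ‖g‖² + d₁ l² μ₁² ≤ s² + d₁ l² μ₁²`, and `s² ≤ 2 l² (‖x₁ - x₂‖² + ‖y₁ - y₂‖²)`.
-/

open MeasureTheory Metric

open Set
open scoped RealInnerProductSpace

section Reflection

variable {E : Type*} [NormedAddCommGroup E] [InnerProductSpace ℝ E]

theorem inner_reflection_orthogonalComplement_singleton (g u : E) :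
    ⟪g, (ℝ ∙ g)ᗮ.reflection u⟫ = -⟪g, u⟫ := by
  set R := (ℝ ∙ g)ᗮ.reflection
  have h := R.inner_map_map g (R u)
  rw [Submodule.reflection_reflection, Submodule.reflection_orthogonalComplement_singleton_eq_neg,
    inner_neg_left] at h
  exact h.symm

theorem norm_sub_reflection_orthogonalComplement_singleton (g u : E) :
    ‖u - (ℝ ∙ g)ᗮ.reflection u‖ = 2 * |⟪g, u⟫| / ‖g‖ := by
  rw [Submodule.reflection_orthogonal_apply, Submodule.reflection_singleton_apply, sub_neg_eq_add,
    add_sub_cancel, ← Nat.cast_smul_eq_nsmul ℝ, norm_smul, norm_smul]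
  rcases eq_or_ne g 0 with rfl | hg
  · simp
  · simp only [RCLike.ofReal_real_eq_id, id_eq, Real.norm_eq_abs, abs_div, abs_pow, abs_norm]
    field_simp
    norm_num [mul_comm]

end Reflection

structure IsRotationInvariantOnSphere {E : Type*} [NormedAddCommGroup E] [InnerProductSpace ℝ E]
    [MeasurableSpace E] (ν : Measure E) : Prop where
  measure_compl_sphere : ν (sphere 0 1)ᶜ = 0
  map_eq : ∀ T : E ≃ₗᵢ[ℝ] E, ν.map T = ν

namespace IsRotationInvariantOnSphere

variable {E : Type*} [NormedAddCommGroup E] [InnerProductSpace ℝ E] [MeasurableSpace E]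
  {ν : Measure E}

theorem ae_norm_eq_one (hν : IsRotationInvariantOnSphere ν) : ∀ᵐ u ∂ν, ‖u‖ = 1 := by
  filter_upwards [measure_eq_zero_iff_ae_notMem.1 hν.measure_compl_sphere] with u hu
  simpa using hu

variable [BorelSpace E]

theorem integral_comp (hν : IsRotationInvariantOnSphere ν) (T : E ≃ₗᵢ[ℝ] E) (φ : E → ℝ) :
    ∫ u, φ (T u) ∂ν = ∫ u, φ u ∂ν :=
  MeasurePreserving.integral_comp ⟨T.continuous.measurable, hν.map_eq T⟩
    T.toHomeomorph.measurableEmbedding φ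

theorem integral_inner_sq_eq_of_norm_eq (hν : IsRotationInvariantOnSphere ν) {w w' : E}
    (h : ‖w‖ = ‖w'‖) : ∫ u, ⟪w, u⟫ ^ 2 ∂ν = ∫ u, ⟪w', u⟫ ^ 2 ∂ν := by
  set R := (ℝ ∙ (w - w'))ᗮ.reflection
  rw [← hν.integral_comp R]
  congr! 3 with u
  rw [← Submodule.reflection_sub h, ← R.inner_map_map, Submodule.reflection_reflection]

variable [FiniteDimensional ℝ E]

theorem integrable_of_continuous [IsFiniteMeasure ν] (hν : IsRotationInvariantOnSphere ν)
    {φ : E → ℝ} (hφ : Continuous φ) : Integrable φ ν := by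
  have hrestrict : ν.restrict (sphere 0 1) = ν :=
    Measure.restrict_eq_self_of_ae_mem (by simpa using hν.ae_norm_eq_one)
  rw [← hrestrict]
  exact hφ.continuousOn.integrableOn_compact (isCompact_sphere 0 1)

theorem finrank_mul_integral_inner_sq [IsProbabilityMeasure ν]
    (hν : IsRotationInvariantOnSphere ν) (w : E) :
    Module.finrank ℝ E * ∫ u, ⟪w, u⟫ ^ 2 ∂ν = ‖w‖ ^ 2 := by
  set b := stdOrthonormalBasis ℝ E
  have hsum : ∫ u, ∑ i, ⟪b i, u⟫ ^ 2 ∂ν = 1 := by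
    rw [integral_congr_ae (g := fun _ => (1 : ℝ))]
    · simp
    filter_upwards [hν.ae_norm_eq_one] with u hu
    rw [b.sum_sq_inner_right, hu, one_pow]
  have hbasis : ∀ i, ∫ u, ⟪w, u⟫ ^ 2 ∂ν = ‖w‖ ^ 2 * ∫ u, ⟪b i, u⟫ ^ 2 ∂ν := fun i => by
    rw [hν.integral_inner_sq_eq_of_norm_eq (w' := ‖w‖ • b i), ← integral_const_mul]
    · simp only [real_inner_smul_left, mul_pow]
    · rw [norm_smul, b.orthonormal.1 i, norm_norm, mul_one]
  calc Module.finrank ℝ E * ∫ u, ⟪w, u⟫ ^ 2 ∂ν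
      = ∑ i, ‖w‖ ^ 2 * ∫ u, ⟪b i, u⟫ ^ 2 ∂ν := by
        simp [← hbasis, Finset.sum_const, Finset.card_univ]
    _ = ‖w‖ ^ 2 := by
        rw [← Finset.mul_sum, ← integral_finsetSum _ fun i _ =>
          hν.integrable_of_continuous (by fun_prop), hsum, mul_one]

theorem finrank_mul_integral_inner_mul_le [IsProbabilityMeasure ν]
    (hν : IsRotationInvariantOnSphere ν) {φ : E → ℝ} {s : ℝ}
    (hφ : ∀ v w, dist (φ v) (φ w) ≤ s * dist v w) (g : E) :
    Module.finrank ℝ E * ∫ u, ⟪g, u⟫ * φ u ∂ν ≤ s * ‖g‖ := by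
  rcases eq_or_ne g 0 with rfl | hg
  · simp
  have hφc : Continuous φ := (LipschitzWith.of_dist_le' hφ).continuous
  set R := (ℝ ∙ g)ᗮ.reflection
  have hflip : ∫ u, ⟪g, u⟫ * φ (R u) ∂ν = -∫ u, ⟪g, u⟫ * φ u ∂ν := by
    rw [← hν.integral_comp R (fun u => ⟪g, u⟫ * φ u), ← integral_neg]
    simp only [R, inner_reflection_orthogonalComplement_singleton, neg_mul, neg_neg]
  have hpoint : ∀ u, ⟪g, u⟫ * φ u - ⟪g, u⟫ * φ (R u) ≤ 2 * (s / ‖g‖) * ⟪g, u⟫ ^ 2 := fun u =>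
    calc ⟪g, u⟫ * φ u - ⟪g, u⟫ * φ (R u) ≤ |⟪g, u⟫| * dist (φ u) (φ (R u)) := by
          rw [Real.dist_eq, ← abs_mul, mul_sub]; exact le_abs_self _
      _ ≤ |⟪g, u⟫| * (s * ‖u - R u‖) := by
          rw [← dist_eq_norm]; exact mul_le_mul_of_nonneg_left (hφ _ _) (abs_nonneg _)
      _ = 2 * (s / ‖g‖) * ⟪g, u⟫ ^ 2 := by
          rw [norm_sub_reflection_orthogonalComplement_singleton, ← sq_abs ⟪g, u⟫]; ring
  have hI : Integrable (fun u => ⟪g, u⟫ * φ u) ν := hν.integrable_of_continuous (by fun_prop)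
  have hIR : Integrable (fun u => ⟪g, u⟫ * φ (R u)) ν :=
    hν.integrable_of_continuous (by fun_prop)
  have hmono : ∫ u, (⟪g, u⟫ * φ u - ⟪g, u⟫ * φ (R u)) ∂ν ≤ ∫ u, 2 * (s / ‖g‖) * ⟪g, u⟫ ^ 2 ∂ν :=
    integral_mono (hI.sub hIR)
    ((hν.integrable_of_continuous (by fun_prop : Continuous fun u => ⟪g, u⟫ ^ 2)).const_mul
      (2 * (s / ‖g‖))) hpoint
  rw [integral_sub hI hIR, hflip, integral_const_mul] at hmono
  have hsq := hν.finrank_mul_integral_inner_sq g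
  calc Module.finrank ℝ E * ∫ u, ⟪g, u⟫ * φ u ∂ν
      ≤ Module.finrank ℝ E * (s / ‖g‖ * ∫ u, ⟪g, u⟫ ^ 2 ∂ν) := by
        gcongr; linarith
    _ = s * ‖g‖ := by
        rw [mul_left_comm, hsq]; field_simp

theorem finrank_mul_integral_sq_le [IsProbabilityMeasure ν]
    (hν : IsRotationInvariantOnSphere ν) {φ : E → ℝ} {s ε : ℝ}
    (hφ : ∀ v w, dist (φ v) (φ w) ≤ s * dist v w) {g : E}
    (hφg : ∀ u, ‖u‖ = 1 → |φ u - ⟪g, u⟫| ≤ ε) :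
    Module.finrank ℝ E * ∫ u, φ u ^ 2 ∂ν ≤ s ^ 2 + Module.finrank ℝ E * ε ^ 2 := by
  have hφc : Continuous φ := (LipschitzWith.of_dist_le' hφ).continuous
  have hint : ∀ ψ : E → ℝ, Continuous ψ → Integrable ψ ν := fun _ => hν.integrable_of_continuous
  have hrem : ∫ u, (φ u - ⟪g, u⟫) ^ 2 ∂ν ≤ ε ^ 2 := by
    refine (integral_mono_ae (hint _ (by fun_prop)) (integrable_const (ε ^ 2)) ?_).trans
      (by simp)
    filter_upwards [hν.ae_norm_eq_one] with u hu
    exact sq_le_sq' (neg_le_of_abs_le (hφg u hu)) (le_of_abs_le (hφg u hu))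
  have hsplit : ∫ u, φ u ^ 2 ∂ν = 2 * ∫ u, ⟪g, u⟫ * φ u ∂ν - ∫ u, ⟪g, u⟫ ^ 2 ∂ν
      + ∫ u, (φ u - ⟪g, u⟫) ^ 2 ∂ν := by
    rw [← integral_const_mul, ← integral_sub, ← integral_add]
    · congr 1 with u; ring
    all_goals exact hint _ (by fun_prop)
  have hcross := hν.finrank_mul_integral_inner_mul_le hφ g
  have hsq := hν.finrank_mul_integral_inner_sq g
  have hd : (0 : ℝ) ≤ Module.finrank ℝ E := Nat.cast_nonneg _
  rw [hsplit]
  nlinarith [sq_nonneg (s - ‖g‖), mul_le_mul_of_nonneg_left hrem hd]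

end IsRotationInvariantOnSphere

section Gradient

variable {E : Type*} [NormedAddCommGroup E] [InnerProductSpace ℝ E] [CompleteSpace E]
  {h : E → ℝ}

theorem hasDerivAt_comp_add_smul {x v : E} {t : ℝ} (hh : DifferentiableAt ℝ h (x + t • v)) :
    HasDerivAt (fun τ : ℝ => h (x + τ • v)) ⟪gradient h (x + t • v), v⟫ t := by
  have hline : HasDerivAt (fun τ : ℝ => x + τ • v) v t := by
    simpa using ((hasDerivAt_id t).smul_const v).const_add x
  simpa [Function.comp_def] using hh.hasGradientAt.hasFDerivAt.comp_hasDerivAt t hline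

theorem abs_sub_sub_inner_gradient_le_s8 (hh : Differentiable ℝ h) {l : ℝ} {x : E}
    (hlip : ∀ z, ‖gradient h z - gradient h x‖ ≤ l * ‖z - x‖) (v : E) :
    |h (x + v) - h x - ⟪gradient h x, v⟫| ≤ l / 2 * ‖v‖ ^ 2 := by
  set F : ℝ → ℝ := fun t => h (x + t • v) - h x - t * ⟪gradient h x, v⟫
  have hF : ∀ t, HasDerivAt F (⟪gradient h (x + t • v), v⟫ - ⟪gradient h x, v⟫) t := fun t =>
    ((hasDerivAt_comp_add_smul (hh _)).sub_const _).sub (hasDerivAt_mul_const _)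
  have hB : ∀ t : ℝ, HasDerivAt (fun t => l / 2 * ‖v‖ ^ 2 * t ^ 2) (l * ‖v‖ ^ 2 * t) t :=
    fun t => ((hasDerivAt_pow 2 t).const_mul _).congr_deriv (by push_cast; ring)
  have hbound : ∀ t ∈ Ico (0 : ℝ) 1,
      ‖⟪gradient h (x + t • v), v⟫ - ⟪gradient h x, v⟫‖ ≤ l * ‖v‖ ^ 2 * t := fun t ht =>
    calc ‖⟪gradient h (x + t • v), v⟫ - ⟪gradient h x, v⟫‖
        ≤ ‖gradient h (x + t • v) - gradient h x‖ * ‖v‖ := by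
          rw [← inner_sub_left]; exact norm_inner_le_norm _ _
      _ ≤ l * ‖t • v‖ * ‖v‖ := by
          gcongr; simpa using hlip (x + t • v)
      _ = l * ‖v‖ ^ 2 * t := by
          rw [norm_smul, Real.norm_of_nonneg ht.1]; ring
  have key := image_norm_le_of_norm_deriv_right_le_deriv_boundary
    (fun t _ => (hF t).continuousAt.continuousWithinAt) (fun t _ => (hF t).hasDerivWithinAt)
    (by simp [F]) hB hbound (right_mem_Icc.2 zero_le_one)
  simpa [F] using key

theorem dist_sub_comp_add_le {h₁ h₂ : E → ℝ} (hh₁ : Differentiable ℝ h₁)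
    (hh₂ : Differentiable ℝ h₂) {a₁ a₂ : E} {C : ℝ}
    (hC : ∀ z, ‖gradient h₁ (a₁ + z) - gradient h₂ (a₂ + z)‖ ≤ C) (v w : E) :
    dist (h₁ (a₁ + v) - h₂ (a₂ + v)) (h₁ (a₁ + w) - h₂ (a₂ + w)) ≤ C * dist v w := by
  have hd : Differentiable ℝ fun z => h₁ (a₁ + z) - h₂ (a₂ + z) := by fun_prop
  have hfd : ∀ z, ‖fderiv ℝ (fun z => h₁ (a₁ + z) - h₂ (a₂ + z)) z‖ ≤ C := fun z => by
    rw [fderiv_fun_sub (by fun_prop) (by fun_prop), fderiv_comp_add_left, fderiv_comp_add_left,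
      ← (InnerProductSpace.toDual ℝ E).symm.norm_map, map_sub]
    exact hC z
  rw [dist_eq_norm, dist_eq_norm]
  exact Convex.norm_image_sub_le_of_norm_fderiv_le (fun z _ => hd z) (fun z _ => hfd z) convex_univ
    (mem_univ w) (mem_univ v)

noncomputable def diffQuotient (h : E → ℝ) (x : E) (μ : ℝ) (u : E) : ℝ :=
  (h (x + μ • u) - h x) / μ

theorem dist_diffQuotient_sub_le {h₁ h₂ : E → ℝ} (hh₁ : Differentiable ℝ h₁)
    (hh₂ : Differentiable ℝ h₂) {a₁ a₂ : E} {C μ : ℝ} (hμ : 0 < μ)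
    (hC : ∀ z, ‖gradient h₁ (a₁ + z) - gradient h₂ (a₂ + z)‖ ≤ C) (v w : E) :
    dist (diffQuotient h₁ a₁ μ v - diffQuotient h₂ a₂ μ v)
      (diffQuotient h₁ a₁ μ w - diffQuotient h₂ a₂ μ w) ≤ C * dist v w := by
  have hmvt := dist_sub_comp_add_le hh₁ hh₂ hC (μ • v) (μ • w)
  rw [dist_smul₀, Real.norm_of_nonneg hμ.le, Real.dist_eq] at hmvt
  have hq : diffQuotient h₁ a₁ μ v - diffQuotient h₂ a₂ μ v
      - (diffQuotient h₁ a₁ μ w - diffQuotient h₂ a₂ μ w)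
      = (h₁ (a₁ + μ • v) - h₂ (a₂ + μ • v) - (h₁ (a₁ + μ • w) - h₂ (a₂ + μ • w))) / μ := by
    simp only [diffQuotient]; ring
  rw [Real.dist_eq, hq, abs_div, abs_of_pos hμ, div_le_iff₀ hμ]
  linarith

theorem abs_diffQuotient_sub_inner_gradient_le (hh : Differentiable ℝ h) {l μ : ℝ} (hμ : 0 < μ)
    {x : E} (hlip : ∀ z, ‖gradient h z - gradient h x‖ ≤ l * ‖z - x‖) (u : E) :
    |diffQuotient h x μ u - ⟪gradient h x, u⟫| ≤ l / 2 * μ * ‖u‖ ^ 2 := by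
  have htaylor := abs_sub_sub_inner_gradient_le_s8 hh hlip (μ • u)
  rw [norm_smul, Real.norm_of_nonneg hμ.le, real_inner_smul_right] at htaylor
  have hq : diffQuotient h x μ u - ⟪gradient h x, u⟫
      = (h (x + μ • u) - h x - μ * ⟪gradient h x, u⟫) / μ := by
    simp only [diffQuotient]; field_simp
  rw [hq, abs_div, abs_of_pos hμ, div_le_iff₀ hμ]
  linarith

theorem abs_diffQuotient_sub_diffQuotient_sub_inner_le {h₁ h₂ : E → ℝ}
    (hh₁ : Differentiable ℝ h₁) (hh₂ : Differentiable ℝ h₂) {l μ : ℝ} (hμ : 0 < μ) {a₁ a₂ : E}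
    (hlip₁ : ∀ z, ‖gradient h₁ z - gradient h₁ a₁‖ ≤ l * ‖z - a₁‖)
    (hlip₂ : ∀ z, ‖gradient h₂ z - gradient h₂ a₂‖ ≤ l * ‖z - a₂‖) (u : E) :
    |diffQuotient h₁ a₁ μ u - diffQuotient h₂ a₂ μ u - ⟪gradient h₁ a₁ - gradient h₂ a₂, u⟫|
      ≤ l * μ * ‖u‖ ^ 2 := by
  have h₁u := abs_le.1 (abs_diffQuotient_sub_inner_gradient_le hh₁ hμ hlip₁ u)
  have h₂u := abs_le.1 (abs_diffQuotient_sub_inner_gradient_le hh₂ hμ hlip₂ u)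
  rw [inner_sub_left, abs_le]
  constructor <;> linarith [h₁u.1, h₁u.2, h₂u.1, h₂u.2]

end Gradient

theorem zeroth_order_estimator_difference_bound_general {d1 d2 : ℕ}
    (f : EuclideanSpace ℝ (Fin d1) → EuclideanSpace ℝ (Fin d2) → ℝ)
    (l μ1 : ℝ) (hμ1 : 0 < μ1)
    (hdiff : Differentiable ℝ (fun p : EuclideanSpace ℝ (Fin d1) × EuclideanSpace ℝ (Fin d2) =>
      f p.1 p.2))
    (hlipx : ∀ x1 y1 x2 y2, ‖gradx f x1 y1 - gradx f x2 y2‖ ≤ l * (‖x1 - x2‖ + ‖y1 - y2‖))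
    (ν : Measure (EuclideanSpace ℝ (Fin d1))) [IsProbabilityMeasure ν]
    (hsupp : ν (Metric.sphere (0 : EuclideanSpace ℝ (Fin d1)) 1)ᶜ = 0)
    (hinv : ∀ T : EuclideanSpace ℝ (Fin d1) ≃ₗᵢ[ℝ] EuclideanSpace ℝ (Fin d1), ν.map T = ν) :
    ∀ (x1 x2 : EuclideanSpace ℝ (Fin d1)) (y1 y2 : EuclideanSpace ℝ (Fin d2)),
      ∫ u, ‖(((d1 : ℝ) / μ1) * (f (x1 + μ1 • u) y1 - f x1 y1)) • u -
            (((d1 : ℝ) / μ1) * (f (x2 + μ1 • u) y2 - f x2 y2)) • u‖ ^ 2 ∂ν ≤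
        3 * (d1 : ℝ) * l ^ 2 * (‖x1 - x2‖ ^ 2 + ‖y1 - y2‖ ^ 2) +
          3 / 2 * l ^ 2 * μ1 ^ 2 * (d1 : ℝ) ^ 2 := by
  intro x1 x2 y1 y2
  have hν : IsRotationInvariantOnSphere ν := ⟨hsupp, hinv⟩
  have hfx : ∀ y, Differentiable ℝ fun x => f x y := fun y =>
    hdiff.comp (differentiable_id.prodMk (differentiable_const y))
  have hlip : ∀ y x z, ‖gradient (f · y) z - gradient (f · y) x‖ ≤ l * ‖z - x‖ :=
    fun y x z => by simpa [gradx] using hlipx z y x y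
  set φ := fun u => diffQuotient (f · y1) x1 μ1 u - diffQuotient (f · y2) x2 μ1 u
  have hφ : ∀ v w, dist (φ v) (φ w) ≤ l * (‖x1 - x2‖ + ‖y1 - y2‖) * dist v w :=
    dist_diffQuotient_sub_le (hfx y1) (hfx y2) hμ1 fun z => by
      simpa only [gradx, add_sub_add_right_eq_sub] using hlipx (x1 + z) y1 (x2 + z) y2
  have hφg : ∀ u, ‖u‖ = 1 → |φ u - ⟪gradx f x1 y1 - gradx f x2 y2, u⟫| ≤ l * μ1 := fun u hu => by
    have h := abs_diffQuotient_sub_diffQuotient_sub_inner_le (hfx y1) (hfx y2) hμ1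
      (hlip y1 x1) (hlip y2 x2) u
    rwa [hu, one_pow, mul_one] at h
  have key := hν.finrank_mul_integral_sq_le hφ hφg
  rw [finrank_euclideanSpace_fin] at key
  have hlhs : ∀ᵐ u ∂ν, ‖(((d1 : ℝ) / μ1) * (f (x1 + μ1 • u) y1 - f x1 y1)) • u -
      (((d1 : ℝ) / μ1) * (f (x2 + μ1 • u) y2 - f x2 y2)) • u‖ ^ 2 = d1 ^ 2 * φ u ^ 2 := by
    filter_upwards [hν.ae_norm_eq_one] with u hu
    rw [← sub_smul, norm_smul, hu, mul_one, Real.norm_eq_abs, sq_abs]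
    simp only [φ, diffQuotient]
    ring
  calc _ = d1 * (d1 * ∫ u, φ u ^ 2 ∂ν) := by
        rw [integral_congr_ae hlhs, integral_const_mul]; ring
    _ ≤ d1 * ((l * (‖x1 - x2‖ + ‖y1 - y2‖)) ^ 2 + d1 * (l * μ1) ^ 2) := by gcongr
    _ ≤ _ := by
        have := add_sq_le (a := ‖x1 - x2‖) (b := ‖y1 - y2‖)
        have hd : (0 : ℝ) ≤ d1 := Nat.cast_nonneg _
        nlinarith [mul_nonneg hd (sq_nonneg l), mul_nonneg (mul_nonneg hd hd) (sq_nonneg (l * μ1))]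

/-- Mean-squared-difference bound for the uniform-smoothing zeroth-order gradient estimator
`ĝ(x,y;u) = (d1/μ1)(f(x + μ1 u, y) − f(x,y)) u` evaluated at two points, where `u` is drawn from
the uniform (rotation-invariant) probability distribution `ν` on the unit sphere of `ℝ^{d1}`:
`E_u ‖ĝ(x1,y1;u) − ĝ(x2,y2;u)‖² ≤ 3 d1 l² (‖x1−x2‖² + ‖y1−y2‖²) + (3/2) l² μ1² d1²`. -/
theorem zeroth_order_estimator_difference_bound {d1 d2 : ℕ}
    (f : EuclideanSpace ℝ (Fin d1) → EuclideanSpace ℝ (Fin d2) → ℝ)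
    (l μ1 : ℝ) (hμ1 : 0 < μ1)
    (hdiff : Differentiable ℝ (fun p : EuclideanSpace ℝ (Fin d1) × EuclideanSpace ℝ (Fin d2) =>
      f p.1 p.2))
    (hlipx : ∀ x1 y1 x2 y2, ‖gradx f x1 y1 - gradx f x2 y2‖ ≤ l * (‖x1 - x2‖ + ‖y1 - y2‖))
    (hlipy : ∀ x1 y1 x2 y2,
      ‖gradient (fun y' => f x1 y') y1 - gradient (fun y' => f x2 y') y2‖ ≤
        l * (‖x1 - x2‖ + ‖y1 - y2‖))
    (ν : Measure (EuclideanSpace ℝ (Fin d1))) [IsProbabilityMeasure ν]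
    (hsupp : ν (Metric.sphere (0 : EuclideanSpace ℝ (Fin d1)) 1)ᶜ = 0)
    (hinv : ∀ T : EuclideanSpace ℝ (Fin d1) ≃ₗᵢ[ℝ] EuclideanSpace ℝ (Fin d1), ν.map T = ν) :
    ∀ (x1 x2 : EuclideanSpace ℝ (Fin d1)) (y1 y2 : EuclideanSpace ℝ (Fin d2)),
      ∫ u, ‖(((d1 : ℝ) / μ1) * (f (x1 + μ1 • u) y1 - f x1 y1)) • u -
            (((d1 : ℝ) / μ1) * (f (x2 + μ1 • u) y2 - f x2 y2)) • u‖ ^ 2 ∂ν ≤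
        3 * (d1 : ℝ) * l ^ 2 * (‖x1 - x2‖ ^ 2 + ‖y1 - y2‖ ^ 2) +
          3 / 2 * l ^ 2 * μ1 ^ 2 * (d1 : ℝ) ^ 2 :=
  zeroth_order_estimator_difference_bound_general f l μ1 hμ1 hdiff hlipx ν hsupp hinv
end

section
/- Let Ψ : ℝ^{d1} → ℝ be differentiable with L̄-Lipschitz gradient. Then for any x, m, v ∈ ℝ^{d1} and α > 0: Ψ(x − αm) ≤ Ψ(x) + α‖∇Ψ(x) − v‖² + α‖v − m‖² − (α/2)‖∇Ψ(x)‖² − (α/2)(1 − αL̄)‖m‖². -/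
/-!
An `L`-smooth function satisfies the quadratic upper bound
`Ψ (x + h) ≤ Ψ x + ⟪∇Ψ x, h⟫ + L / 2 * ‖h‖ ^ 2`: by the Lipschitz bound on the derivative,
`t ↦ Ψ (x + t • h) - t ⟪∇Ψ x, h⟫ - L t ^ 2 ‖h‖ ^ 2 / 2` is antitone on `[0, 1]`.
For `h = -α • m` the linear term is handled by polarisation,
`-2 ⟪g, m⟫ = ‖g - m‖ ^ 2 - ‖g‖ ^ 2 - ‖m‖ ^ 2`, and by `‖g - m‖ ^ 2 ≤ 2 ‖g - v‖ ^ 2 + 2 ‖v - m‖ ^ 2`.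
-/

theorem image_add_le_of_norm_fderiv_sub_le {E : Type*} [NormedAddCommGroup E] [NormedSpace ℝ E]
    {f : E → ℝ} {L : ℝ} (hf : Differentiable ℝ f)
    (hL : ∀ x y, ‖fderiv ℝ f x - fderiv ℝ f y‖ ≤ L * ‖x - y‖) (x h : E) :
    f (x + h) ≤ f x + fderiv ℝ f x h + L / 2 * ‖h‖ ^ 2 := by
  set g : ℝ → ℝ := fun t ↦ f (x + t • h) - t * fderiv ℝ f x h - L / 2 * t ^ 2 * ‖h‖ ^ 2
  have hline : ∀ t : ℝ, HasDerivAt (fun t : ℝ ↦ x + t • h) h t := fun t ↦ by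
    simpa using ((hasDerivAt_id t).smul_const h).const_add x
  have hg : ∀ t : ℝ, HasDerivAt g
      (fderiv ℝ f (x + t • h) h - fderiv ℝ f x h - L * t * ‖h‖ ^ 2) t := fun t ↦ by
    have hquad := ((hasDerivAt_pow 2 t).const_mul (L / 2)).mul_const (‖h‖ ^ 2)
    refine ((((hf _).hasFDerivAt.comp_hasDerivAt t (hline t)).sub
      ((hasDerivAt_id t).mul_const (fderiv ℝ f x h))).sub hquad).congr_deriv ?_
    simp only [Nat.cast_ofNat, Nat.add_one_sub_one, pow_one, one_mul]
    ring
  have hg_nonpos : ∀ t ∈ Set.Ici (0 : ℝ),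
      fderiv ℝ f (x + t • h) h - fderiv ℝ f x h - L * t * ‖h‖ ^ 2 ≤ 0 := fun t ht ↦ by
    have : (fderiv ℝ f (x + t • h) - fderiv ℝ f x) h ≤ L * t * ‖h‖ ^ 2 :=
      calc _ ≤ ‖fderiv ℝ f (x + t • h) - fderiv ℝ f x‖ * ‖h‖ :=
            (Real.le_norm_self _).trans (ContinuousLinearMap.le_opNorm _ _)
        _ ≤ L * ‖t • h‖ * ‖h‖ := by
          simpa using mul_le_mul_of_nonneg_right (hL (x + t • h) x) (norm_nonneg h)
        _ = L * t * ‖h‖ ^ 2 := by rw [norm_smul, Real.norm_of_nonneg ht]; ring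
    rw [sub_apply] at this
    linarith
  have hanti : AntitoneOn g (Set.Icc 0 1) :=
    antitoneOn_of_hasDerivWithinAt_nonpos (convex_Icc 0 1)
      (HasDerivAt.continuousOn fun t _ ↦ hg t) (fun t _ ↦ (hg t).hasDerivWithinAt)
      fun t ht ↦ hg_nonpos t (interior_subset (s := Set.Icc 0 1) ht).1
  have := hanti (Set.left_mem_Icc.2 zero_le_one) (Set.right_mem_Icc.2 zero_le_one) zero_le_one
  norm_num [g] at this
  linarith

theorem image_add_le_of_norm_gradient_sub_le {E : Type*} [NormedAddCommGroup E]
    [InnerProductSpace ℝ E] [CompleteSpace E] {f : E → ℝ} {L : ℝ} (hf : Differentiable ℝ f)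
    (hL : ∀ x y, ‖gradient f x - gradient f y‖ ≤ L * ‖x - y‖) (x h : E) :
    f (x + h) ≤ f x + inner ℝ (gradient f x) h + L / 2 * ‖h‖ ^ 2 := by
  have hnorm : ∀ x y, ‖fderiv ℝ f x - fderiv ℝ f y‖ = ‖gradient f x - gradient f y‖ :=
    fun x y ↦ by rw [gradient, gradient, ← map_sub, LinearIsometryEquiv.norm_map]
  simpa [gradient] using
    image_add_le_of_norm_fderiv_sub_le hf (fun x y ↦ (hnorm x y).trans_le (hL x y)) x h

theorem norm_sub_sq_le_two_mul {E : Type*} [SeminormedAddCommGroup E] (a b c : E) :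
    ‖a - c‖ ^ 2 ≤ 2 * (‖a - b‖ ^ 2 + ‖b - c‖ ^ 2) :=
  (pow_le_pow_left₀ (norm_nonneg _) (norm_sub_le_norm_sub_add_norm_sub a b c) 2).trans add_sq_le

/-- Descent inequality for an `L̄`-smooth function `Ψ` after one inexact gradient step
`x⁺ = x − αm`:
`Ψ(x − αm) ≤ Ψ(x) + α‖∇Ψ(x) − v‖² + α‖v − m‖² − (α/2)‖∇Ψ(x)‖² − (α/2)(1 − αL̄)‖m‖²`. -/
theorem smooth_descent_inexact_step {d1 : ℕ}
    (Ψ : EuclideanSpace ℝ (Fin d1) → ℝ) (Lb : ℝ)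
    (hdiff : Differentiable ℝ Ψ)
    (hlip : ∀ x1 x2, ‖gradient Ψ x1 - gradient Ψ x2‖ ≤ Lb * ‖x1 - x2‖) :
    ∀ (x m v : EuclideanSpace ℝ (Fin d1)) (α : ℝ), 0 < α →
      Ψ (x - α • m) ≤
        Ψ x + α * ‖gradient Ψ x - v‖ ^ 2 + α * ‖v - m‖ ^ 2 - α / 2 * ‖gradient Ψ x‖ ^ 2 -
          α / 2 * (1 - α * Lb) * ‖m‖ ^ 2 := by
  intro x m v α hα
  have hdescent := image_add_le_of_norm_gradient_sub_le hdiff hlip x (-(α • m))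
  rw [← sub_eq_add_neg, inner_neg_right, real_inner_smul_right, norm_neg, norm_smul,
    Real.norm_of_nonneg hα.le] at hdescent
  have hpolar := norm_sub_sq_real (gradient Ψ x) m
  have hsplit := mul_le_mul_of_nonneg_left (norm_sub_sq_le_two_mul (gradient Ψ x) v m) hα.le
  linear_combination hdescent - α / 2 * hpolar + hsplit / 2
end
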